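/- Let λ = (λ_1,…,λ_a), μ = (μ_1,…,μ_b), ν = (ν_1,…,ν_c) be indices with a, b ≥ 1. Then the 'p divides L_a+M_b' part of li(λ,μ,ν;T) equals (−1)^{wt(μ)} (Σ_{i=1}^{a+b−1} ζ^{(i)}_𝒜(λ⋆μ)·(T^p)^i) · li_ν(T); that is, the element of ℬ whose p-component is the sum of T^{L_a+M_b+N_c} / (∏_{x=1}^a L_x^{λ_x} · ∏_{y=1}^b M_y^{μ_y} · ∏_{z=1}^c (L_a+M_b+N_z)^{ν_z}) over all 0 < l_i, m_j, n_k < p with p | L_a+M_b (restricted to terms with denominators prime to p) equals (−1)^{wt(μ)} Σ_{i=1}^{a+b−1} ζ^{(i)}_𝒜(λ⋆μ)·(T^p)^i·li_ν(T). -/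

import Mathlib

open scoped BigOperators

set_option synthInstance.maxHeartbeats 400000

namespace FMP

/-- The type of prime numbers. -/
abbrev PP := Nat.Primes

instance (p : PP) : Fact (Nat.Prime (p : ℕ)) := ⟨p.2⟩

/-- The ideal of families vanishing at all but finitely many primes. -/
def cofinIdeal (R : PP → Type) [∀ p, CommRing (R p)] : Ideal (∀ p, R p) where
  carrier := {f | ∀ᶠ p in Filter.cofinite, f p = 0}
  add_mem' := by
    intro f g hf hg
    show ∀ᶠ p in Filter.cofinite, (f + g) p = 0
    simp only [Set.mem_setOf_eq] at hf hg
    filter_upwards [hf, hg] with p h1 h2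
    simp [h1, h2]
  zero_mem' := by
    show ∀ᶠ p in Filter.cofinite, (0 : ∀ p, R p) p = 0
    exact Filter.Eventually.of_forall fun p => rfl
  smul_mem' := by
    intro c f hf
    show ∀ᶠ p in Filter.cofinite, (c • f) p = 0
    simp only [Set.mem_setOf_eq] at hf
    filter_upwards [hf] with p h
    simp [h]

lemma mem_cofinIdeal {R : PP → Type} [∀ p, CommRing (R p)] (f : ∀ p, R p) :
    f ∈ cofinIdeal R ↔ ∀ᶠ p in Filter.cofinite, f p = 0 := Iff.rfl

/-- The ring 𝒜 = (∏ₚ 𝔽ₚ)/(⊕ₚ 𝔽ₚ). -/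
abbrev A : Type := (∀ p : PP, ZMod p) ⧸ cofinIdeal fun p => ZMod p

/-- The ring ℬ = (∏ₚ 𝔽ₚ[T])/(⊕ₚ 𝔽ₚ[T]). -/
abbrev B : Type := (∀ p : PP, Polynomial (ZMod p)) ⧸ cofinIdeal fun p => Polynomial (ZMod p)

noncomputable def Amk : (∀ p : PP, ZMod p) →+* A := Ideal.Quotient.mk _
noncomputable def Bmk : (∀ p : PP, Polynomial (ZMod p)) →+* B := Ideal.Quotient.mk _

/-- The componentwise action of 𝒜 on ℬ, as a ring homomorphism 𝒜 →+* ℬ. -/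
noncomputable def AtoB : A →+* B :=
  Ideal.Quotient.lift _
    (Bmk.comp (Pi.ringHom fun p => Polynomial.C.comp (Pi.evalRingHom (fun q : PP => ZMod (q : ℕ)) p)))
    (fun f hf => by
      rw [RingHom.comp_apply]
      rw [show Bmk = Ideal.Quotient.mk (cofinIdeal fun p => Polynomial (ZMod p)) from rfl]
      rw [Ideal.Quotient.eq_zero_iff_mem, mem_cofinIdeal]
      rw [mem_cofinIdeal] at hf
      filter_upwards [hf] with p h
      change Polynomial.C (f p) = 0
      rw [h]
      exact map_zero _)

/-- Partial sums: `psum l i = l 0 + ... + l i`. -/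
def psum {r : ℕ} (l : Fin r → ℕ) (i : Fin r) : ℕ := ∑ j ∈ Finset.Iic i, l j

/-- The finset of tuples `(l 0, ..., l (r-1))` with `0 < l i < p`. -/
def pf (r p : ℕ) : Finset (Fin r → ℕ) := Fintype.piFinset fun _ => Finset.Ioo 0 p

/-- The denominator `L_1^{k_1} ⋯ L_r^{k_r}` of a term, as an element of 𝔽ₚ.
(Its inverse is `0` whenever some partial sum is divisible by `p`, so taking inverses
of these denominators automatically implements the restricted sums `Σ'`.) -/
def den (p : PP) (k : List ℕ) (l : Fin k.length → ℕ) : ZMod (p : ℕ) :=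
  ∏ i, ((psum l i : ℕ) : ZMod (p : ℕ)) ^ k.get i

/-- The weight of an index. -/
def wt (k : List ℕ) : ℕ := k.sum

/-- The finite multiple zeta value ζ_𝒜(k). -/
noncomputable def zetaA (k : List ℕ) : A :=
  Amk fun p => ∑ l ∈ (pf k.length (p : ℕ)).filter (fun l => ∑ i, l i < (p : ℕ)), (den p k l)⁻¹

/-- The variant ζ^{(i)}_𝒜(k) of finite multiple zeta values. -/
noncomputable def zetaAi (i : ℕ) (k : List ℕ) : A :=
  Amk fun p => ∑ l ∈ (pf k.length (p : ℕ)).filter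
      (fun l => (i - 1) * (p : ℕ) < ∑ j, l j ∧ ∑ j, l j < i * (p : ℕ)), (den p k l)⁻¹

/-- The finite multiple polylogarithm li_k(T) ∈ ℬ. -/
noncomputable def liT (k : List ℕ) : B :=
  Bmk fun p => ∑ l ∈ pf k.length (p : ℕ),
    Polynomial.C ((den p k l)⁻¹) * Polynomial.X ^ (∑ i, l i)

/-- The element T^p of ℬ. -/
noncomputable def Tp : B := Bmk fun p => Polynomial.X ^ (p : ℕ)

/-- The finite multiple polylogarithm li(λ, μ, ν; T) of type (λ, μ, ν). -/
noncomputable def liType (lam mu nu : List ℕ) : B :=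
  Bmk fun p =>
    ∑ l ∈ pf lam.length (p : ℕ), ∑ m ∈ pf mu.length (p : ℕ), ∑ n ∈ pf nu.length (p : ℕ),
      Polynomial.C ((den p lam l * den p mu m *
          ∏ z, ((((∑ i, l i) + (∑ j, m j) + psum n z : ℕ)) : ZMod (p : ℕ)) ^ nu.get z)⁻¹) *
        Polynomial.X ^ ((∑ i, l i) + (∑ j, m j) + (∑ z, n z))

/-!
Write `L = L_a`, `M = M_b`. As `0 < L + M < (a + b) p`, the condition `p ∣ L + M` means
`L + M = i p` for a unique `1 ≤ i ≤ a + b - 1`. For such `(l, m)` the tuple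
`k = (l_1, …, l_a, m_b, …, m_2)` has entries in `(0, p)` and total `i p - m_1 ∈ ((i - 1) p, i p)`,
and `m_1` is recovered from that total, so `(l, m) ↦ k` is a bijection onto the tuples summed in
`ζ^{(i)}_𝒜`. The partial sums of `k` are `L_1, …, L_a ≡ -M_b` followed by
`i p - M_{b-1}, …, i p - M_1 ≡ -M_{b-1}, …, -M_1`, so its denominator for the weight `λ ⋆ μ` is
`(-1)^{wt μ}` times the product of the denominators of `l` and `m`. Finally `p ∣ L + M` turns the
`ν`-partial sums `L + M + N_z` into `N_z`, which splits off `li_ν(T)`.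
-/

open Finset Polynomial

lemma sum_eq_sum_range_getD (l : List ℕ) : l.sum = ∑ i ∈ range l.length, l.getD i 0 := by
  rw [← Fin.sum_univ_getElem, ← Fin.sum_univ_eq_sum_range]
  simp

lemma getD_star (lam0 mu0 : List ℕ) (la mb : ℕ) {x : ℕ} (hx : x < lam0.length + 1 + mu0.length) :
    (lam0 ++ [la + mb] ++ mu0.reverse).getD x 0 = (lam0 ++ [la]).getD x 0 +
      if lam0.length ≤ x then (mu0 ++ [mb]).getD (lam0.length + mu0.length - x) 0 else 0 := by
  rcases lt_trichotomy x lam0.length with hlt | rfl | hgt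
  · rw [List.getD_append _ _ _ _ (by simpa using hlt.trans (Nat.lt_succ_self _)),
      List.getD_append _ _ _ _ hlt, List.getD_append _ _ _ _ hlt, if_neg (by omega), add_zero]
  · simp
  · rw [List.getD_append_right _ _ _ _ (by simp; omega),
      List.getD_eq_default (lam0 ++ [la]) 0 (by simp; omega), if_pos hgt.le,
      List.getD_reverse _ (by simp; omega), List.getD_append _ _ _ _ (by omega)]
    simp only [List.length_append, List.length_singleton, zero_add]
    congr 1
    omega

/-- `den` for tuples extended to `ℕ → ℕ`, where reversing and concatenating need no `Fin` casts. -/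
def denRange (p : ℕ) (e f : ℕ → ℕ) (n : ℕ) : ZMod p :=
  ∏ x ∈ range n, ((∑ j ∈ range (x + 1), f j : ℕ) : ZMod p) ^ e x

section denRange

variable {p : ℕ}

lemma denRange_congr {e e' f f' : ℕ → ℕ} {n : ℕ} (he : ∀ x < n, e x = e' x)
    (hf : ∀ j < n, f j = f' j) : denRange p e f n = denRange p e' f' n := by
  refine prod_congr rfl fun x hx => ?_
  rw [mem_range] at hx
  rw [he x hx, sum_congr rfl fun j hj => hf j (by rw [mem_range] at hj; omega)]

lemma denRange_add_weight (e₁ e₂ f : ℕ → ℕ) (n : ℕ) :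
    denRange p (fun x => e₁ x + e₂ x) f n = denRange p e₁ f n * denRange p e₂ f n := by
  simp only [denRange, pow_add, prod_mul_distrib]

lemma denRange_eq_of_weight_eq_zero {e : ℕ → ℕ} (f : ℕ → ℕ) {a n : ℕ} (ha : a ≤ n)
    (he : ∀ x, a ≤ x → e x = 0) : denRange p e f n = denRange p e f a := by
  refine (prod_subset (range_subset_range.2 ha) fun x _ hx => ?_).symm
  rw [he x (by simpa using hx), pow_zero]

lemma sum_range_add_sum_range_reflect (f : ℕ → ℕ) {x n : ℕ} (hx : x < n) :
    ∑ j ∈ range (x + 1), f j + ∑ j ∈ range (n - x), f (n - j) = ∑ j ∈ range (n + 1), f j := by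
  rw [show n + 1 = x + 1 + (n - x) by omega, sum_range_add f (x + 1),
    ← sum_range_reflect (fun j => f (x + 1 + j))]
  congr 1
  exact sum_congr rfl fun j hj => by rw [mem_range] at hj; congr 1; omega

/-- Modulo a total sum `0`, the partial sums of `f` and of `f` read backwards are opposite. -/
lemma denRange_reflect (e f : ℕ → ℕ) (n : ℕ)
    (hf : ((∑ j ∈ range (n + 1), f j : ℕ) : ZMod p) = 0) :
    denRange p e f n = (-1) ^ (∑ y ∈ range n, e (n - 1 - y)) *
      denRange p (fun y => e (n - 1 - y)) (fun j => f (n - j)) n := by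
  rw [denRange, denRange, ← prod_range_reflect, ← prod_pow_eq_pow_sum, ← prod_mul_distrib]
  refine prod_congr rfl fun y hy => ?_
  rw [mem_range] at hy
  have hsum := sum_range_add_sum_range_reflect f (show n - 1 - y < n by omega)
  rw [show n - (n - 1 - y) = y + 1 by omega] at hsum
  have hneg : ((∑ j ∈ range (n - 1 - y + 1), f j : ℕ) : ZMod p)
      = -((∑ j ∈ range (y + 1), f (n - j) : ℕ) : ZMod p) :=
    eq_neg_of_add_eq_zero_left (by rw [← Nat.cast_add, hsum, hf])
  rw [← mul_pow, neg_one_mul, hneg]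

/-- The weight `λ ⋆ μ` splits as `λ` plus `μ` read backwards from position `a - 1`; the second
part, read from the other end of the tuple, becomes `μ` with signs. -/
lemma denRange_star (lam0 mu0 : List ℕ) (la mb : ℕ) (f : ℕ → ℕ)
    (hf : ((∑ j ∈ range ((lam0 ++ [la + mb] ++ mu0.reverse).length + 1), f j : ℕ) : ZMod p) = 0) :
    denRange p (fun x => (lam0 ++ [la + mb] ++ mu0.reverse).getD x 0) f
        (lam0 ++ [la + mb] ++ mu0.reverse).length
      = (-1) ^ (mu0 ++ [mb]).sum *
        (denRange p (fun x => (lam0 ++ [la]).getD x 0) f (lam0 ++ [la]).length *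
          denRange p (fun y => (mu0 ++ [mb]).getD y 0)
            (fun j => f ((lam0 ++ [la + mb] ++ mu0.reverse).length - j)) (mu0 ++ [mb]).length) := by
  simp only [List.length_append, List.length_singleton, List.length_reverse] at hf ⊢
  set K := lam0.length + 1 + mu0.length
  set E : ℕ → ℕ := fun x =>
    if lam0.length ≤ x then (mu0 ++ [mb]).getD (lam0.length + mu0.length - x) 0 else 0
  have hE : ∀ y < K, E (K - 1 - y) = (mu0 ++ [mb]).getD y 0 := by
    intro y hy
    by_cases hyb : y ≤ mu0.length
    · simp only [E, if_pos (show lam0.length ≤ K - 1 - y by omega)]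
      congr 1
      omega
    · simp only [E, if_neg (show ¬lam0.length ≤ K - 1 - y by omega)]
      rw [List.getD_eq_default _ _ (by simp; omega)]
  have hsign : ∑ y ∈ range K, E (K - 1 - y) = (mu0 ++ [mb]).sum := by
    rw [sum_congr rfl fun y hy => hE y (mem_range.1 hy), sum_eq_sum_range_getD]
    refine (sum_subset (range_subset_range.2 (by simp; omega)) fun y _ hy => ?_).symm
    exact List.getD_eq_default _ _ (by simpa using hy)
  have hlam : denRange p (fun x => (lam0 ++ [la]).getD x 0) f K
      = denRange p (fun x => (lam0 ++ [la]).getD x 0) f (lam0.length + 1) :=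
    denRange_eq_of_weight_eq_zero f (by omega)
      fun x hx => List.getD_eq_default _ _ (by simpa using hx)
  have hmu : denRange p (fun y => E (K - 1 - y)) (fun j => f (K - j)) K
      = denRange p (fun y => (mu0 ++ [mb]).getD y 0) (fun j => f (K - j)) (mu0.length + 1) :=
    (denRange_congr hE fun _ _ => rfl).trans <| denRange_eq_of_weight_eq_zero _ (by omega)
      fun x hx => List.getD_eq_default _ _ (by simpa using hx)
  calc denRange p (fun x => (lam0 ++ [la + mb] ++ mu0.reverse).getD x 0) f K
      = denRange p (fun x => (lam0 ++ [la]).getD x 0 + E x) f K :=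
        denRange_congr (fun x hx => getD_star _ _ _ _ hx) fun _ _ => rfl
    _ = denRange p (fun x => (lam0 ++ [la]).getD x 0) f K * denRange p E f K :=
        denRange_add_weight _ _ f K
    _ = _ := by
        rw [hlam, denRange_reflect E f K hf, hsign, hmu]
        ring

end denRange

lemma den_eq_denRange (p : PP) (k : List ℕ) (l : Fin k.length → ℕ) {f : ℕ → ℕ}
    (hf : ∀ j : Fin k.length, f j = l j) :
    den p k l = denRange p (fun x => k.getD x 0) f k.length := by
  rw [den, denRange, ← Fin.prod_univ_eq_prod_range]
  refine prod_congr rfl fun i _ => ?_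
  have hpsum : psum l i = ∑ j ∈ range (i + 1), f j := by
    rw [psum, Nat.range_succ_eq_Iic, ← Fin.map_valEmbedding_Iic, sum_map]
    simp only [Fin.valEmbedding_apply, hf]
  rw [hpsum, List.getD_eq_getElem _ _ i.2, List.get_eq_getElem]

lemma mem_pf {r p : ℕ} {l : Fin r → ℕ} : l ∈ pf r p ↔ ∀ j, 0 < l j ∧ l j < p := by
  simp [pf, Fintype.mem_piFinset]

section sumPf

variable {M : Type*} [AddCommMonoid M]

lemma sum_pf_cast {n n' : ℕ} (h : n = n') (p : ℕ) (g : (Fin n → ℕ) → M) :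
    ∑ w ∈ pf n p, g w = ∑ w ∈ pf n' p, g (fun j => w (Fin.cast h j)) := by
  subst h
  rfl

lemma sum_pf_sum_pf (a b p : ℕ) (g : (Fin a → ℕ) → (Fin b → ℕ) → M) :
    ∑ l ∈ pf a p, ∑ m ∈ pf b p, g l m
      = ∑ w ∈ pf (a + b) p, g (fun x => w (Fin.castAdd b x)) (fun y => w (Fin.natAdd a y.rev)) := by
  rw [← sum_product']
  refine sum_nbij' (fun x => Fin.append x.1 (fun y => x.2 y.rev))
    (fun w => (fun x => w (Fin.castAdd b x), fun y => w (Fin.natAdd a y.rev))) ?_ ?_ ?_ ?_ ?_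
  · rintro ⟨l, m⟩ hlm
    rw [mem_product, mem_pf, mem_pf] at hlm
    rw [mem_pf]
    exact Fin.addCases (fun x => by simpa using hlm.1 x) (fun y => by simpa using hlm.2 y.rev)
  · intro w hw
    rw [mem_pf] at hw
    rw [mem_product, mem_pf, mem_pf]
    exact ⟨fun x => hw _, fun y => hw _⟩
  · rintro ⟨l, m⟩ -
    simp
  · rintro w -
    simp only [Fin.rev_rev]
    exact Fin.append_castAdd_natAdd
  · rintro ⟨l, m⟩ -
    simp

lemma sum_pf_succ_filter_sum_eq (n p s : ℕ) (hps : p ≤ s) (g : (Fin n → ℕ) → M) :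
    ∑ w ∈ pf (n + 1) p with ∑ j, w j = s, g (Fin.init w)
      = ∑ k ∈ pf n p with s - p < ∑ j, k j ∧ ∑ j, k j < s, g k := by
  refine sum_nbij' Fin.init (fun k => Fin.snoc k (s - ∑ j, k j)) ?_ ?_ ?_ ?_ fun _ _ => rfl
  · intro w hw
    rw [mem_filter, mem_pf, Fin.sum_univ_castSucc] at hw
    rw [mem_filter, mem_pf]
    have hlast := hw.1 (Fin.last n)
    exact ⟨fun j => hw.1 j.castSucc, by simp only [Fin.init]; omega⟩
  · intro k hk
    rw [mem_filter, mem_pf] at hk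
    rw [mem_filter, mem_pf, Fin.sum_univ_castSucc]
    simp only [Fin.snoc_castSucc, Fin.snoc_last]
    refine ⟨Fin.lastCases ?_ fun j => ?_, by omega⟩
    · simp only [Fin.snoc_last]; omega
    · simpa using hk.1 j
  · intro w hw
    rw [mem_filter, Fin.sum_univ_castSucc] at hw
    have hlast : s - ∑ j, Fin.init w j = w (Fin.last n) := by simp only [Fin.init]; omega
    simp only [hlast, Fin.snoc_init_self]
  · rintro k -
    simp

end sumPf

lemma den_mul_den_eq_den_star (p : PP) (lam0 mu0 : List ℕ) (la mb : ℕ)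
    (hK : (lam0 ++ [la]).length + (mu0 ++ [mb]).length
      = (lam0 ++ [la + mb] ++ mu0.reverse).length + 1)
    (w : Fin ((lam0 ++ [la]).length + (mu0 ++ [mb]).length) → ℕ)
    (hw : ((∑ j, w j : ℕ) : ZMod p) = 0) :
    den p (lam0 ++ [la]) (fun x => w (Fin.castAdd _ x)) *
        den p (mu0 ++ [mb]) (fun y => w (Fin.natAdd _ y.rev))
      = (-1) ^ (mu0 ++ [mb]).sum *
        den p (lam0 ++ [la + mb] ++ mu0.reverse) (fun j => w (Fin.cast hK.symm j.castSucc)) := by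
  set K := (lam0 ++ [la + mb] ++ mu0.reverse).length
  let W : ℕ → ℕ := fun j => if h : j < (lam0 ++ [la]).length + (mu0 ++ [mb]).length
    then w ⟨j, h⟩ else 0
  have hWw : ∀ j : Fin _, W j = w j := fun j => dif_pos j.2
  have hW : ((∑ j ∈ range (K + 1), W j : ℕ) : ZMod p) = 0 := by
    rw [← hK, ← Fin.sum_univ_eq_sum_range, sum_congr rfl fun j _ => hWw j]
    exact hw
  rw [den_eq_denRange p _ _ (f := W) fun x => hWw (Fin.castAdd _ x),
    den_eq_denRange p _ _ (f := fun j => W (K - j)) fun y =>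
      (congrArg W (by simp only [Fin.coe_natAdd, Fin.val_rev]; omega)).trans (hWw _),
    den_eq_denRange p _ _ (f := W) fun j => hWw (Fin.cast hK.symm j.castSucc),
    denRange_star lam0 mu0 la mb W hW, ← mul_assoc, ← pow_add, ← two_mul, pow_mul, neg_one_sq,
    one_pow, one_mul]

def zetaAiComp (i : ℕ) (k : List ℕ) (p : PP) : ZMod p :=
  ∑ l ∈ (pf k.length p).filter (fun l => (i - 1) * p < ∑ j, l j ∧ ∑ j, l j < i * p),
    (den p k l)⁻¹

lemma sum_ite_den_inv_eq_zetaAiComp (p : PP) (lam0 mu0 : List ℕ) (la mb : ℕ) {i : ℕ}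
    (hi : 1 ≤ i) :
    ∑ l ∈ pf (lam0 ++ [la]).length p, ∑ m ∈ pf (mu0 ++ [mb]).length p,
      (if ∑ x, l x + ∑ y, m y = i * p
        then (den p (lam0 ++ [la]) l * den p (mu0 ++ [mb]) m)⁻¹ else 0)
    = (-1) ^ (mu0 ++ [mb]).sum * zetaAiComp i (lam0 ++ [la + mb] ++ mu0.reverse) p := by
  have hK : (lam0 ++ [la]).length + (mu0 ++ [mb]).length
      = (lam0 ++ [la + mb] ++ mu0.reverse).length + 1 := by
    simp only [List.length_append, List.length_singleton, List.length_reverse]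
    omega
  have hsplit : ∀ w : Fin ((lam0 ++ [la]).length + (mu0 ++ [mb]).length) → ℕ,
      ∑ x, w (Fin.castAdd _ x) + ∑ y : Fin (mu0 ++ [mb]).length, w (Fin.natAdd _ y.rev)
        = ∑ j, w j := fun w => by
    rw [Fin.sum_univ_add, ← Equiv.sum_comp Fin.revPerm fun y => w (Fin.natAdd _ y)]
    rfl
  calc _ = ∑ w ∈ pf ((lam0 ++ [la]).length + (mu0 ++ [mb]).length) p,
          if ∑ j, w j = i * p then (den p (lam0 ++ [la]) (fun x => w (Fin.castAdd _ x)) *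
            den p (mu0 ++ [mb]) (fun y => w (Fin.natAdd _ y.rev)))⁻¹ else 0 := by
        rw [sum_pf_sum_pf]
        exact sum_congr rfl fun w _ => by rw [hsplit]
    _ = ∑ w ∈ pf ((lam0 ++ [la]).length + (mu0 ++ [mb]).length) p,
          if ∑ j, w j = i * p then (-1) ^ (mu0 ++ [mb]).sum *
            (den p (lam0 ++ [la + mb] ++ mu0.reverse) fun j => w (Fin.cast hK.symm j.castSucc))⁻¹
          else 0 := by
        refine sum_congr rfl fun w _ => ?_
        split_ifs with hw
        · have hw0 : ((∑ j, w j : ℕ) : ZMod p) = 0 := by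
            rw [hw, Nat.cast_mul, ZMod.natCast_self, mul_zero]
          rw [den_mul_den_eq_den_star p lam0 mu0 la mb hK w hw0, mul_inv, ← inv_pow, inv_neg_one]
        · rfl
    _ = (-1) ^ (mu0 ++ [mb]).sum * ∑ w ∈ pf ((lam0 ++ [la + mb] ++ mu0.reverse).length + 1) p
          with ∑ j, w j = i * p, (den p (lam0 ++ [la + mb] ++ mu0.reverse) (Fin.init w))⁻¹ := by
        rw [mul_sum, sum_filter, sum_pf_cast hK.symm]
        refine sum_congr rfl fun w _ => ?_
        rw [Fin.sum_congr' w hK.symm]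
        rfl
    _ = _ := by
        rw [sum_pf_succ_filter_sum_eq _ (p : ℕ) (i * p) (Nat.le_mul_of_pos_left _ hi)
          fun k => (den p (lam0 ++ [la + mb] ++ mu0.reverse) k)⁻¹, ← Nat.sub_one_mul]
        rfl

lemma sum_pos_of_mem_pf {n p : ℕ} {l : Fin n → ℕ} (hl : l ∈ pf n p) (hn : 0 < n) :
    0 < ∑ j, l j :=
  sum_pos (fun j _ => (mem_pf.1 hl j).1) ⟨⟨0, hn⟩, mem_univ _⟩

lemma sum_lt_mul_of_mem_pf {n p : ℕ} {l : Fin n → ℕ} (hl : l ∈ pf n p) (hn : 0 < n) :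
    ∑ j, l j < n * p := by
  calc ∑ j, l j < ∑ _j : Fin n, p :=
        sum_lt_sum_of_nonempty ⟨⟨0, hn⟩, mem_univ _⟩ fun j _ => (mem_pf.1 hl j).2
    _ = n * p := by simp

lemma ite_dvd_eq_sum_Icc {M : Type*} [AddCommMonoid M] {p N x : ℕ} (hp : 0 < p) (hx : 0 < x)
    (hxN : x < N * p) (c : M) :
    (if p ∣ x then c else 0) = ∑ i ∈ Icc 1 (N - 1), if x = i * p then c else 0 := by
  by_cases hdvd : p ∣ x
  · obtain ⟨q, rfl⟩ := hdvd
    have hqN := Nat.lt_of_mul_lt_mul_left (hxN.trans_eq (mul_comm N p))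
    have hq : q ∈ Icc 1 (N - 1) := mem_Icc.2 ⟨Nat.pos_of_mul_pos_left hx, by omega⟩
    have hiff : ∀ i, p * q = i * p ↔ q = i := fun i => by
      rw [mul_comm i, Nat.mul_right_inj hp.ne']
    simp only [hiff, sum_ite_eq, hq, if_true, dvd_mul_right]
  · rw [if_neg hdvd]
    exact (sum_eq_zero fun i _ => if_neg fun h => hdvd ⟨i, h.trans (mul_comm i p)⟩).symm

noncomputable def liComp (k : List ℕ) (p : PP) : (ZMod p)[X] :=
  ∑ n ∈ pf k.length p, C (den p k n)⁻¹ * X ^ (∑ j, n j)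

lemma sum_ite_dvd_eq_mul_liComp (p : PP) (nu : List ℕ) (D : ZMod p) (S : ℕ) :
    ∑ n ∈ pf nu.length p, (if (p : ℕ) ∣ S then
        C ((D * ∏ z, ((S + psum n z : ℕ) : ZMod p) ^ nu.get z)⁻¹) * X ^ (S + ∑ z, n z) else 0)
      = (if (p : ℕ) ∣ S then C D⁻¹ * X ^ S else 0) * liComp nu p := by
  split_ifs with hS
  · rw [liComp, mul_sum]
    refine sum_congr rfl fun n _ => ?_
    simp only [Nat.cast_add, (ZMod.natCast_eq_zero_iff _ _).2 hS, zero_add]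
    rw [← den, mul_inv, map_mul, pow_add]
    ring
  · simp

lemma ite_eq_mul_C_ite (p : ℕ) (S i : ℕ) (a : ZMod p) :
    (if S = i * p then C a * X ^ S else 0) = C (if S = i * p then a else 0) * (X ^ p) ^ i := by
  split_ifs with h
  · rw [h, ← pow_mul, mul_comm i]
  · rw [map_zero, zero_mul]

lemma sum_ite_dvd_eq_sum_Icc_mul_liComp (p : PP) (nu : List ℕ) (D : ZMod p) {S N : ℕ}
    (hS : 0 < S) (hSN : S < N * p) :
    ∑ n ∈ pf nu.length p, (if (p : ℕ) ∣ S then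
        C ((D * ∏ z, ((S + psum n z : ℕ) : ZMod p) ^ nu.get z)⁻¹) * X ^ (S + ∑ z, n z) else 0)
      = (∑ i ∈ Icc 1 (N - 1), C (if S = i * p then D⁻¹ else 0) * (X ^ (p : ℕ)) ^ i) *
          liComp nu p := by
  rw [sum_ite_dvd_eq_mul_liComp, ite_dvd_eq_sum_Icc p.2.pos hS hSN]
  exact congrArg (· * liComp nu p) (sum_congr rfl fun i _ => ite_eq_mul_C_ite _ _ _ _)

lemma divisible_part_comp (p : PP) (lam0 mu0 nu : List ℕ) (la mb : ℕ) :
    (∑ l ∈ pf (lam0 ++ [la]).length p, ∑ m ∈ pf (mu0 ++ [mb]).length p, ∑ n ∈ pf nu.length p,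
        if (p : ℕ) ∣ ∑ i, l i + ∑ j, m j then
          C ((den p (lam0 ++ [la]) l * den p (mu0 ++ [mb]) m *
              ∏ z, ((∑ i, l i + ∑ j, m j + psum n z : ℕ) : ZMod p) ^ nu.get z)⁻¹) *
            X ^ (∑ i, l i + ∑ j, m j + ∑ z, n z)
        else 0)
      = (-1) ^ (mu0 ++ [mb]).sum *
        ∑ i ∈ Icc 1 ((lam0 ++ [la]).length + (mu0 ++ [mb]).length - 1),
          C (zetaAiComp i (lam0 ++ [la + mb] ++ mu0.reverse) p) * (X ^ (p : ℕ)) ^ i *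
            liComp nu p := by
  set N := (lam0 ++ [la]).length + (mu0 ++ [mb]).length
  have hlen : ∀ k : List ℕ, ∀ c, 0 < (k ++ [c]).length := fun k c => by simp
  have hpos : ∀ l ∈ pf (lam0 ++ [la]).length p, ∀ m : Fin (mu0 ++ [mb]).length → ℕ,
      0 < ∑ i, l i + ∑ j, m j :=
    fun l hl _ => Nat.add_pos_left (sum_pos_of_mem_pf hl (hlen _ _)) _
  have hlt : ∀ l ∈ pf (lam0 ++ [la]).length p, ∀ m ∈ pf (mu0 ++ [mb]).length p,
      ∑ i, l i + ∑ j, m j < N * p := fun l hl m hm => by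
    rw [add_mul]
    exact Nat.add_lt_add (sum_lt_mul_of_mem_pf hl (hlen _ _)) (sum_lt_mul_of_mem_pf hm (hlen _ _))
  calc _ = ∑ l ∈ pf (lam0 ++ [la]).length p, ∑ m ∈ pf (mu0 ++ [mb]).length p,
          (∑ i ∈ Icc 1 (N - 1), C (if ∑ i, l i + ∑ j, m j = i * p
            then (den p (lam0 ++ [la]) l * den p (mu0 ++ [mb]) m)⁻¹ else 0) *
              (X ^ (p : ℕ)) ^ i) * liComp nu p :=
        sum_congr rfl fun l hl => sum_congr rfl fun m hm =>
          sum_ite_dvd_eq_sum_Icc_mul_liComp p nu _ (hpos l hl m) (hlt l hl m hm)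
    _ = (∑ i ∈ Icc 1 (N - 1),
          C ((-1) ^ (mu0 ++ [mb]).sum * zetaAiComp i (lam0 ++ [la + mb] ++ mu0.reverse) p) *
            (X ^ (p : ℕ)) ^ i) * liComp nu p := by
        simp only [← sum_mul]
        rw [sum_congr rfl fun l _ => sum_comm, sum_comm]
        refine congrArg (· * liComp nu p) (sum_congr rfl fun i hi => ?_)
        rw [← sum_ite_den_inv_eq_zetaAiComp p lam0 mu0 la mb (mem_Icc.1 hi).1]
        simp only [map_sum, sum_mul]
    _ = _ := by
        rw [mul_sum, sum_mul]
        refine sum_congr rfl fun i _ => ?_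
        rw [map_mul, map_pow, map_neg, map_one]
        ring

/-- `λ = lam0 ++ [la]`, `μ = mu0 ++ [mb]`, so `λ ⋆ μ = lam0 ++ [la + mb] ++ mu0.reverse`. -/
theorem divisible_part_eq_general (lam0 mu0 nu : List ℕ) (la mb : ℕ) :
    Bmk (fun p =>
      ∑ l ∈ pf (lam0 ++ [la]).length (p : ℕ), ∑ m ∈ pf (mu0 ++ [mb]).length (p : ℕ),
        ∑ n ∈ pf nu.length (p : ℕ),
        if (p : ℕ) ∣ ((∑ i, l i) + (∑ j, m j)) then
          Polynomial.C ((den p (lam0 ++ [la]) l * den p (mu0 ++ [mb]) m *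
              ∏ z, ((((∑ i, l i) + (∑ j, m j) + psum n z : ℕ)) : ZMod (p : ℕ)) ^ nu.get z)⁻¹) *
            Polynomial.X ^ ((∑ i, l i) + (∑ j, m j) + (∑ z, n z))
        else 0)
      = (-1 : B) ^ wt (mu0 ++ [mb])
          * ∑ i ∈ Finset.Icc 1 ((lam0 ++ [la]).length + (mu0 ++ [mb]).length - 1),
              AtoB (zetaAi i (lam0 ++ [la + mb] ++ mu0.reverse)) * Tp ^ i * liT nu := by
  have hzeta : ∀ i, AtoB (zetaAi i (lam0 ++ [la + mb] ++ mu0.reverse))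
      = Bmk fun p => C (zetaAiComp i (lam0 ++ [la + mb] ++ mu0.reverse) p) :=
    fun i => Ideal.Quotient.lift_mk _ _ _
  have hrhs : (-1 : B) ^ wt (mu0 ++ [mb])
        * ∑ i ∈ Icc 1 ((lam0 ++ [la]).length + (mu0 ++ [mb]).length - 1),
            AtoB (zetaAi i (lam0 ++ [la + mb] ++ mu0.reverse)) * Tp ^ i * liT nu
      = Bmk ((-1) ^ (mu0 ++ [mb]).sum *
          ∑ i ∈ Icc 1 ((lam0 ++ [la]).length + (mu0 ++ [mb]).length - 1),
            (fun p => C (zetaAiComp i (lam0 ++ [la + mb] ++ mu0.reverse) p)) *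
              (fun p : PP => (X : (ZMod p)[X]) ^ (p : ℕ)) ^ i * liComp nu) := by
    simp only [map_mul, map_pow, map_neg, map_one, map_sum, hzeta]
    rfl
  rw [hrhs]
  refine congrArg Bmk (funext fun p => ?_)
  simp only [Pi.mul_apply, Pi.pow_apply, Pi.neg_apply, Pi.one_apply, Finset.sum_apply]
  exact divisible_part_comp p lam0 mu0 nu la mb

/-- The part of li(λ, μ, ν; T) where p divides L_a + M_b equals
(−1)^{wt(μ)} (Σ_{i=1}^{a+b−1} ζ^{(i)}_𝒜(λ⋆μ)·(Tᵖ)^i)·li_ν(T).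
Here λ = lam0 ++ [la], μ = mu0 ++ [mb] and λ⋆μ = lam0 ++ [la + mb] ++ mu0.reverse. -/
theorem divisible_part_eq (lam0 mu0 nu : List ℕ) (la mb : ℕ) (hla : 0 < la) (hmb : 0 < mb)
    (hlam : ∀ i ∈ lam0, 0 < i) (hmu : ∀ i ∈ mu0, 0 < i) (hnu : ∀ i ∈ nu, 0 < i) :
    Bmk (fun p =>
      ∑ l ∈ pf (lam0 ++ [la]).length (p : ℕ), ∑ m ∈ pf (mu0 ++ [mb]).length (p : ℕ),
        ∑ n ∈ pf nu.length (p : ℕ),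
        if (p : ℕ) ∣ ((∑ i, l i) + (∑ j, m j)) then
          Polynomial.C ((den p (lam0 ++ [la]) l * den p (mu0 ++ [mb]) m *
              ∏ z, ((((∑ i, l i) + (∑ j, m j) + psum n z : ℕ)) : ZMod (p : ℕ)) ^ nu.get z)⁻¹) *
            Polynomial.X ^ ((∑ i, l i) + (∑ j, m j) + (∑ z, n z))
        else 0)
      = (-1 : B) ^ wt (mu0 ++ [mb])
          * ∑ i ∈ Finset.Icc 1 ((lam0 ++ [la]).length + (mu0 ++ [mb]).length - 1),
              AtoB (zetaAi i (lam0 ++ [la + mb] ++ mu0.reverse)) * Tp ^ i * liT nu :=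
  divisible_part_eq_general lam0 mu0 nu la mb

end FMP
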